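/- arXiv:math/0508037 — 9 statements merged into one kernel-verified Lean document; each statement's English description precedes it below -/
import Mathlib

section
/- Suppose all weights satisfy w_i < 0, and set Q_i = (P_i, √(−w_i)) ∈ ℝⁿ × ℝ = ℝ^{n+1}. Then for every x ∈ ℝⁿ, writing x̄ = (x,0) ∈ ℝ^{n+1}, and for all indices i, j: g_i(x) ≤ g_j(x) if and only if ‖x̄ − Q_i‖ ≤ ‖x̄ − Q_j‖. (Hence every power diagram in ℝⁿ is the hyperplane section {x_{n+1} = 0} of the Voronoi diagram of the points Q_1,…,Q_N in ℝ^{n+1}.) -/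
open scoped RealInnerProductSpace

/-- with `Q_i = (P_i, √(−w_i))` in `ℝ^{n+1}` and `x̄ = (x,0)`,
`g_i(x) ≤ g_j(x)` iff `‖x̄ − Q_i‖ ≤ ‖x̄ − Q_j‖`; hence every power diagram is a
hyperplane section of a Voronoi diagram one dimension up. -/
theorem power_diagram_is_sliced_voronoi
    (n N : ℕ) (hN : 1 ≤ N)
    (P : Fin N → EuclideanSpace ℝ (Fin n)) (w : Fin N → ℝ)
    (hw : ∀ i, w i < 0)
    (g : Fin N → EuclideanSpace ℝ (Fin n) → ℝ)
    (hg : ∀ i x, g i x = ‖x - P i‖ ^ 2 / 2 - w i / 2)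
    (Q : Fin N → WithLp 2 (EuclideanSpace ℝ (Fin n) × ℝ))
    (hQ : ∀ i, Q i = (WithLp.equiv 2 (EuclideanSpace ℝ (Fin n) × ℝ)).symm
      (P i, Real.sqrt (-w i)))
    (x : EuclideanSpace ℝ (Fin n)) (i j : Fin N) :
    g i x ≤ g j x ↔
      ‖(WithLp.equiv 2 (EuclideanSpace ℝ (Fin n) × ℝ)).symm (x, 0) - Q i‖ ≤
      ‖(WithLp.equiv 2 (EuclideanSpace ℝ (Fin n) × ℝ)).symm (x, 0) - Q j‖ := by
  have key : ∀ k, ‖(WithLp.equiv 2 (EuclideanSpace ℝ (Fin n) × ℝ)).symm (x, 0) - Q k‖ ^ 2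
      = 2 * g k x := by
    intro k
    rw [hQ, hg, WithLp.prod_norm_sq_eq_of_L2]
    have h1 : ((WithLp.equiv 2 (EuclideanSpace ℝ (Fin n) × ℝ)).symm (x, 0) -
        (WithLp.equiv 2 (EuclideanSpace ℝ (Fin n) × ℝ)).symm (P k, Real.sqrt (-w k))).fst
        = x - P k := rfl
    have h2 : ((WithLp.equiv 2 (EuclideanSpace ℝ (Fin n) × ℝ)).symm (x, 0) -
        (WithLp.equiv 2 (EuclideanSpace ℝ (Fin n) × ℝ)).symm (P k, Real.sqrt (-w k))).snd
        = -Real.sqrt (-w k) := by simp [Prod.snd]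
    rw [h1, h2]
    rw [norm_neg, Real.norm_eq_abs, sq_abs, Real.sq_sqrt (by linarith [hw k])]
    ring
  rw [← pow_le_pow_iff_left₀ (norm_nonneg _) (norm_nonneg _) two_ne_zero, key, key]
  constructor <;> intro h <;> linarith
end

section
/- For ξ ∈ ℝⁿ, the family of real numbers {⟨ξ,x⟩ − f(x) : x ∈ ℝⁿ} is bounded above if and only if ξ lies in the convex hull of {P_1,…,P_N}. (In other words, the domain of the Legendre transform of f is exactly the convex hull of the points P_i.) -/
open scoped RealInnerProductSpace

/-!
The functions `x ↦ ⟪ξ, x⟫ - f x` bounded above form a convex set of slopes `ξ`, and it contains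
every `P i` because `f ≥ f_i`; hence it contains the convex hull. Conversely, if `ξ` is outside
the (closed) convex hull, a separating vector `v` has `⟪v, P i⟫ ≤ u < ⟪v, ξ⟫`, and since `f` is
the largest of the `f_i`, along the ray `t • v` the function `⟪ξ, x⟫ - f x` grows at least
like `t (⟪v, ξ⟫ - u)` minus a constant.
-/

open Set Filter

variable {E : Type*} [NormedAddCommGroup E] [InnerProductSpace ℝ E]

/-- The effective domain of the Legendre transform `ξ ↦ sup_x (⟪ξ, x⟫ - f x)`. -/
def conjugateDomain (f : E → ℝ) : Set E :=
  {ξ | BddAbove (range fun x => ⟪ξ, x⟫ - f x)}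

theorem convex_conjugateDomain (f : E → ℝ) : Convex ℝ (conjugateDomain f) := by
  rintro ξ ⟨M, hM⟩ η ⟨M', hM'⟩ a b ha hb hab
  refine ⟨a * M + b * M', ?_⟩
  rintro _ ⟨x, rfl⟩
  have hξ : ⟪ξ, x⟫ - f x ≤ M := hM ⟨x, rfl⟩
  have hη : ⟪η, x⟫ - f x ≤ M' := hM' ⟨x, rfl⟩
  calc ⟪a • ξ + b • η, x⟫ - f x = a * (⟪ξ, x⟫ - f x) + b * (⟪η, x⟫ - f x) := by
        rw [inner_add_left, real_inner_smul_left, real_inner_smul_left]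
        linear_combination (f x) * hab
    _ ≤ a * M + b * M' := by gcongr

theorem mem_conjugateDomain_of_forall_le {f : E → ℝ} {p : E} (c : ℝ)
    (h : ∀ x, ⟪x, p⟫ + c ≤ f x) : p ∈ conjugateDomain f :=
  ⟨-c, by
    rintro _ ⟨x, rfl⟩
    linarith [h x, real_inner_comm p x]⟩

theorem notMem_conjugateDomain_of_forall_exists_le {ι : Type*} [Finite ι] {f : E → ℝ}
    (P : ι → E) (c : ι → ℝ) (hf : ∀ x, ∃ i, f x ≤ ⟪x, P i⟫ + c i) {ξ v : E} {u : ℝ}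
    (hPu : ∀ i, ⟪v, P i⟫ ≤ u) (huξ : u < ⟪v, ξ⟫) : ξ ∉ conjugateDomain f := by
  obtain ⟨C, hC⟩ := (finite_range c).bddAbove
  have hray : ∀ t : ℝ, 0 ≤ t → t * (⟪v, ξ⟫ - u) - C ≤ ⟪ξ, t • v⟫ - f (t • v) := by
    intro t ht
    obtain ⟨i, hi⟩ := hf (t • v)
    have hci : c i ≤ C := hC ⟨i, rfl⟩
    rw [real_inner_smul_left] at hi
    rw [real_inner_smul_right, real_inner_comm]
    nlinarith [mul_le_mul_of_nonneg_left (hPu i) ht]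
  have htendsto : Tendsto (fun t : ℝ => ⟪ξ, t • v⟫ - f (t • v)) atTop atTop := by
    refine tendsto_atTop_mono' atTop (eventually_ge_atTop 0 |>.mono hray) ?_
    exact tendsto_atTop_add_const_right _ _ (tendsto_id.atTop_mul_const (sub_pos.2 huξ))
  exact fun hbdd => not_bddAbove_of_tendsto_atTop htendsto <|
    hbdd.mono (range_comp_subset_range (· • v) fun x => ⟪ξ, x⟫ - f x)

theorem geometric_hahn_banach_closed_point_inner [CompleteSpace E] {s : Set E}
    (hs : Convex ℝ s) (hsc : IsClosed s) {ξ : E} (hξ : ξ ∉ s) :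
    ∃ (v : E) (u : ℝ), (∀ y ∈ s, ⟪v, y⟫ < u) ∧ u < ⟪v, ξ⟫ := by
  obtain ⟨l, u, hl, hu⟩ := geometric_hahn_banach_closed_point hs hsc hξ
  refine ⟨(InnerProductSpace.toDual ℝ E).symm l, u, fun y hy => ?_, ?_⟩
  · simpa only [InnerProductSpace.toDual_symm_apply] using hl y hy
  · simpa only [InnerProductSpace.toDual_symm_apply] using hu

theorem conjugateDomain_eq_convexHull [CompleteSpace E] {ι : Type*} [Finite ι] {f : E → ℝ}
    (P : ι → E) (c : ι → ℝ) (hle : ∀ i x, ⟪x, P i⟫ + c i ≤ f x)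
    (hge : ∀ x, ∃ i, f x ≤ ⟪x, P i⟫ + c i) : conjugateDomain f = convexHull ℝ (range P) := by
  refine Subset.antisymm (fun ξ hξ => ?_) ?_
  · by_contra hξP
    obtain ⟨v, u, hvu, huξ⟩ := geometric_hahn_banach_closed_point_inner (convex_convexHull ℝ _)
      ((finite_range P).isClosed_convexHull ℝ) hξP
    exact notMem_conjugateDomain_of_forall_exists_le P c hge
      (fun i => (hvu _ (subset_convexHull ℝ _ ⟨i, rfl⟩)).le) huξ hξ
  · refine convexHull_min ?_ (convex_conjugateDomain f)
    rintro _ ⟨i, rfl⟩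
    exact mem_conjugateDomain_of_forall_le (c i) (hle i)

theorem legendre_domain_eq_convexHull_general
    (n N : ℕ)
    (P : Fin N → EuclideanSpace ℝ (Fin n))
    (c : Fin N → ℝ)
    (fi : Fin N → EuclideanSpace ℝ (Fin n) → ℝ)
    (hfi : ∀ i x, fi i x = ⟪x, P i⟫ + c i)
    (f : EuclideanSpace ℝ (Fin n) → ℝ)
    (hf : ∀ x, IsGreatest (Set.range fun i => fi i x) (f x))
    (ξ : EuclideanSpace ℝ (Fin n)) :
    BddAbove (Set.range fun x => ⟪ξ, x⟫ - f x) ↔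
      ξ ∈ convexHull ℝ (Set.range P) := by
  have hle : ∀ i x, ⟪x, P i⟫ + c i ≤ f x := fun i x => hfi i x ▸ (hf x).2 ⟨i, rfl⟩
  have hge : ∀ x, ∃ i, f x ≤ ⟪x, P i⟫ + c i := fun x =>
    let ⟨i, hi⟩ := (hf x).1
    ⟨i, (hi.symm.trans (hfi i x)).le⟩
  rw [← conjugateDomain_eq_convexHull P c hle hge]
  rfl

/-- the family `{⟨ξ,x⟩ − f(x) : x ∈ ℝⁿ}` is bounded above iff `ξ`
lies in the convex hull of the points `P_i`; i.e. the domain of the Legendre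
transform of `f` is exactly the convex hull of the `P_i`. -/
theorem legendre_domain_eq_convexHull
    (n N : ℕ) (hN : 1 ≤ N)
    (P : Fin N → EuclideanSpace ℝ (Fin n)) (w : Fin N → ℝ)
    (c : Fin N → ℝ) (hc : ∀ i, c i = -((‖P i‖ ^ 2 - w i) / 2))
    (fi : Fin N → EuclideanSpace ℝ (Fin n) → ℝ)
    (hfi : ∀ i x, fi i x = ⟪x, P i⟫ + c i)
    (f : EuclideanSpace ℝ (Fin n) → ℝ)
    (hf : ∀ x, IsGreatest (Set.range fun i => fi i x) (f x))
    (ξ : EuclideanSpace ℝ (Fin n)) :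
    BddAbove (Set.range fun x => ⟪ξ, x⟫ - f x) ↔
      ξ ∈ convexHull ℝ (Set.range P) :=
  legendre_domain_eq_convexHull_general n N P c fi hfi f hf ξ
end

section
/- Let ξ lie in the convex hull of {P_1,…,P_N}. Then the Legendre transform satisfies f̂(ξ) = sup_{x ∈ ℝⁿ}(⟨ξ,x⟩ − f(x)) = min { −∑_{i=1}^N λ_i c_i : λ_1,…,λ_N ≥ 0, ∑_i λ_i = 1, ∑_i λ_i P_i = ξ }, and this minimum is attained by some such convex combination. -/
/-!
Averaging `⟪x, Pᵢ⟫ + cᵢ ≤ f x` with the weights of a convex combination `∑ λᵢ Pᵢ = ξ` gives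
`⟪ξ, x⟫ - f x ≤ -∑ λᵢ cᵢ`; the admissible weights form a compact set, so the right side attains
its minimum `m`. Conversely, for `r < m` the point `(ξ, -r)` lies strictly above the polytope
spanned by the lifted points `(Pᵢ, cᵢ)` in `E × ℝ`, which contains `(ξ, -m)`. A hyperplane strictly
separating them is therefore not vertical: it is the graph of some `p ↦ b - ⟪x, p⟫` with all
`(Pᵢ, cᵢ)` below it and `(ξ, -r)` above it, i.e. `f x < b < ⟪ξ, x⟫ - r`.
-/

open scoped RealInnerProductSpace
open Set

variable {ι E : Type*} [Fintype ι]

section ConvexWeights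

variable [AddCommGroup E] [Module ℝ E]

def convexWeights (P : ι → E) (ξ : E) : Set (ι → ℝ) :=
  {l ∈ stdSimplex ℝ ι | ∑ i, l i • P i = ξ}

theorem convexHull_range_eq_image_stdSimplex (P : ι → E) :
    convexHull ℝ (range P) = (fun l : ι → ℝ => ∑ i, l i • P i) '' stdSimplex ℝ ι := by
  classical
  have hL : (fun l : ι → ℝ => ∑ i, l i • P i) = Fintype.linearCombination ℝ P :=
    funext fun l => (Fintype.linearCombination_apply ℝ P l).symm
  rw [hL, ← convexHull_basis_eq_stdSimplex, LinearMap.image_convexHull, ← range_comp]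
  congr with i
  simp [Fintype.linearCombination_apply]

theorem mem_convexHull_range_iff_nonempty_convexWeights {P : ι → E} {ξ : E} :
    ξ ∈ convexHull ℝ (range P) ↔ (convexWeights P ξ).Nonempty := by
  rw [convexHull_range_eq_image_stdSimplex]
  rfl

theorem mk_mem_convexHull_range_iff {P : ι → E} {c : ι → ℝ} {ξ : E} {s : ℝ} :
    (ξ, s) ∈ convexHull ℝ (range fun i => (P i, c i)) ↔
      ∃ l ∈ convexWeights P ξ, ∑ i, l i * c i = s := by
  simp [convexHull_range_eq_image_stdSimplex, convexWeights, Prod.ext_iff, Prod.fst_sum,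
    Prod.snd_sum, and_assoc]

theorem isCompact_convexWeights [TopologicalSpace E] [T2Space E] [ContinuousAdd E]
    [ContinuousSMul ℝ E] (P : ι → E) (ξ : E) : IsCompact (convexWeights P ξ) :=
  (isCompact_stdSimplex ℝ ι).inter_right (isClosed_eq (by fun_prop) continuous_const)

end ConvexWeights

section InnerProductSpace

variable [NormedAddCommGroup E] [InnerProductSpace ℝ E] {P : ι → E} {c : ι → ℝ} {ξ : E}

theorem inner_sub_le_neg_sum_of_mem_convexWeights {l : ι → ℝ} (hl : l ∈ convexWeights P ξ)
    {x : E} {y : ℝ} (hy : ∀ i, ⟪x, P i⟫ + c i ≤ y) : ⟪ξ, x⟫ - y ≤ -∑ i, l i * c i := by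
  obtain ⟨⟨hl₀, hl₁⟩, rfl⟩ := hl
  calc ⟪∑ i, l i • P i, x⟫ - y = ∑ i, l i * (⟪P i, x⟫ - y) := by
        simp only [sum_inner, real_inner_smul_left, mul_sub, Finset.sum_sub_distrib,
          ← Finset.sum_mul, hl₁, one_mul]
    _ ≤ ∑ i, l i * -c i := Finset.sum_le_sum fun i _ =>
        mul_le_mul_of_nonneg_left (by linarith [hy i, real_inner_comm x (P i)]) (hl₀ i)
    _ = -∑ i, l i * c i := by simp

theorem exists_forall_inner_add_lt_of_mk_notMem_convexHull [CompleteSpace E] {s t : ℝ}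
    (hs : (ξ, s) ∈ convexHull ℝ (range fun i => (P i, c i)))
    (ht : (ξ, t) ∉ convexHull ℝ (range fun i => (P i, c i))) (hst : s ≤ t) :
    ∃ x : E, ∀ i, ⟪x, P i⟫ + c i < ⟪x, ξ⟫ + t := by
  obtain ⟨F, u, hF_hull, hF_pt⟩ := geometric_hahn_banach_closed_point (convex_convexHull ℝ _)
    ((finite_range _).isCompact_convexHull ℝ).isClosed ht
  set a : ℝ := F ((0 : E), (1 : ℝ))
  set y := (InnerProductSpace.toDual ℝ E).symm (F.comp (ContinuousLinearMap.inl ℝ E ℝ))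
  have hF : ∀ p r, F (p, r) = ⟪y, p⟫ + r * a := by
    intro p r
    have hpr : (p, r) = (p, (0 : ℝ)) + r • ((0 : E), (1 : ℝ)) := by simp
    rw [hpr, map_add, map_smul, InnerProductSpace.toDual_symm_apply, smul_eq_mul]
    rfl
  have hP : ∀ i, ⟪y, P i⟫ + c i * a < u := fun i => by
    simpa [hF] using hF_hull _ (subset_convexHull ℝ _ ⟨i, rfl⟩)
  have hs' := hF_hull _ hs
  rw [hF] at hs' hF_pt
  have ha : 0 < a := by nlinarith
  refine ⟨a⁻¹ • y, fun i => lt_of_mul_lt_mul_left ?_ ha.le⟩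
  simp only [real_inner_smul_left, mul_add, ← mul_assoc, mul_inv_cancel₀ ha.ne', one_mul]
  linarith [hP i]

theorem iSup_inner_sub_eq_neg_sum_of_isMinOn [CompleteSpace E] {f : E → ℝ} {lam : ι → ℝ}
    (hf : ∀ x, IsGreatest (range fun i => ⟪x, P i⟫ + c i) (f x))
    (hlam : lam ∈ convexWeights P ξ)
    (hmin : IsMinOn (fun l => -∑ i, l i * c i) (convexWeights P ξ) lam) :
    ⨆ x, (⟪ξ, x⟫ - f x) = -∑ i, lam i * c i := by
  refine ciSup_eq_of_forall_le_of_forall_lt_exists_gt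
    (fun x => inner_sub_le_neg_sum_of_mem_convexWeights hlam fun i => (hf x).2 ⟨i, rfl⟩)
    fun r hr => ?_
  have hs : (ξ, ∑ i, lam i * c i) ∈ convexHull ℝ (range fun i => (P i, c i)) :=
    mk_mem_convexHull_range_iff.2 ⟨lam, hlam, rfl⟩
  have ht : (ξ, -r) ∉ convexHull ℝ (range fun i => (P i, c i)) := by
    intro h
    obtain ⟨l, hl, hlc⟩ := mk_mem_convexHull_range_iff.1 h
    have := isMinOn_iff.1 hmin l hl
    simp only [hlc] at this
    linarith
  obtain ⟨x, hx⟩ := exists_forall_inner_add_lt_of_mk_notMem_convexHull hs ht (by linarith)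
  obtain ⟨i, hi⟩ := (hf x).1
  refine ⟨x, ?_⟩
  have := hx i
  simp only at hi
  rw [hi, real_inner_comm] at this
  linarith

end InnerProductSpace

theorem legendre_transform_eq_min_convex_combination_general
    (n N : ℕ)
    (P : Fin N → EuclideanSpace ℝ (Fin n))
    (c : Fin N → ℝ)
    (fi : Fin N → EuclideanSpace ℝ (Fin n) → ℝ)
    (hfi : ∀ i x, fi i x = ⟪x, P i⟫ + c i)
    (f : EuclideanSpace ℝ (Fin n) → ℝ)
    (hf : ∀ x, IsGreatest (Set.range fun i => fi i x) (f x))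
    (ξ : EuclideanSpace ℝ (Fin n)) (hξ : ξ ∈ convexHull ℝ (Set.range P)) :
    ∃ lam : Fin N → ℝ,
      (∀ i, 0 ≤ lam i) ∧ (∑ i, lam i) = 1 ∧ (∑ i, lam i • P i) = ξ ∧
      (⨆ x, (⟪ξ, x⟫ - f x)) = -∑ i, lam i * c i ∧
      ∀ mu : Fin N → ℝ, (∀ i, 0 ≤ mu i) → (∑ i, mu i) = 1 →
        (∑ i, mu i • P i) = ξ →
        -∑ i, lam i * c i ≤ -∑ i, mu i * c i := by
  obtain rfl : fi = fun i x => ⟪x, P i⟫ + c i := funext₂ hfi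
  obtain ⟨lam, hlam, hmin⟩ := (isCompact_convexWeights P ξ).exists_isMinOn
    (mem_convexHull_range_iff_nonempty_convexWeights.1 hξ)
    (Continuous.continuousOn (by fun_prop) : ContinuousOn (fun l : Fin N → ℝ => -∑ i, l i * c i) _)
  exact ⟨lam, hlam.1.1, hlam.1.2, hlam.2, iSup_inner_sub_eq_neg_sum_of_isMinOn hf hlam hmin,
    fun mu hmu₀ hmu₁ hmuξ => isMinOn_iff.1 hmin mu ⟨⟨hmu₀, hmu₁⟩, hmuξ⟩⟩

/-- for `ξ` in the convex hull of the `P_i`, the Legendre transform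
`f̂(ξ) = sup_x (⟨ξ,x⟩ − f(x))` equals the minimum of `−∑ λ_i c_i` over all convex
combinations `∑ λ_i P_i = ξ`, and the minimum is attained. -/
theorem legendre_transform_eq_min_convex_combination
    (n N : ℕ) (hN : 1 ≤ N)
    (P : Fin N → EuclideanSpace ℝ (Fin n)) (w : Fin N → ℝ)
    (c : Fin N → ℝ) (hc : ∀ i, c i = -((‖P i‖ ^ 2 - w i) / 2))
    (fi : Fin N → EuclideanSpace ℝ (Fin n) → ℝ)
    (hfi : ∀ i x, fi i x = ⟪x, P i⟫ + c i)
    (f : EuclideanSpace ℝ (Fin n) → ℝ)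
    (hf : ∀ x, IsGreatest (Set.range fun i => fi i x) (f x))
    (ξ : EuclideanSpace ℝ (Fin n)) (hξ : ξ ∈ convexHull ℝ (Set.range P)) :
    ∃ lam : Fin N → ℝ,
      (∀ i, 0 ≤ lam i) ∧ (∑ i, lam i) = 1 ∧ (∑ i, lam i • P i) = ξ ∧
      (⨆ x, (⟪ξ, x⟫ - f x)) = -∑ i, lam i * c i ∧
      ∀ mu : Fin N → ℝ, (∀ i, 0 ≤ mu i) → (∑ i, mu i) = 1 →
        (∑ i, mu i • P i) = ξ →
        -∑ i, lam i * c i ≤ -∑ i, mu i * c i :=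
  legendre_transform_eq_min_convex_combination_general n N P c fi hfi f hf ξ hξ
end

section
/- For every ξ in the convex hull of {P_1,…,P_N}, the Legendre transform of f satisfies f̂(ξ) = inf { t ∈ ℝ : (ξ, t) ∈ conv{(P_1, −c_1), …, (P_N, −c_N)} }, where (P_i, −c_i) ∈ ℝⁿ × ℝ is the lifted point. (In other words, the graph of f̂ over the convex hull of the P_i is the lower convex hull, with respect to the last coordinate direction, of the lifted points (P_i, −c_i).) -/
/-!
Write `K` for the convex hull of the lifted points `(P i, -c i)`. Each affine function
`(p, t) ↦ ⟪p, x⟫ - t` is at most `f x` at the lifted points, hence on all of `K`, so every value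
`⟪ξ, x⟫ - f x` is at most the lowest height `t₀` of `K` above `ξ`. Conversely, if the supremum
`s` were below `t₀`, then `(ξ, s) ∉ K` could be strictly separated from the compact convex `K` by
a non-vertical hyperplane, i.e. by the graph of an affine function `p ↦ ⟪p, x⟫ - u`; this `x`
then gives `⟪ξ, x⟫ - f x > s`.
-/

open scoped RealInnerProductSpace

open Set

variable {E : Type*} [NormedAddCommGroup E] [InnerProductSpace ℝ E]

theorem StrongDual.exists_eq_inner_sub_mul [CompleteSpace E] (φ : StrongDual ℝ (E × ℝ)) :
    ∃ (y : E) (a : ℝ), ∀ v t, φ (v, t) = ⟪v, y⟫ - a * t := by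
  refine ⟨(InnerProductSpace.toDual ℝ E).symm (φ.comp (.inl ℝ E ℝ)), -φ (0, 1), fun v t => ?_⟩
  have hsplit : ((v, t) : E × ℝ) = (v, 0) + t • (0, 1) := by simp
  rw [real_inner_comm, InnerProductSpace.toDual_symm_apply, hsplit, map_add, map_smul]
  simp [mul_comm]

theorem Convex.exists_inner_sub_lt_of_notMem [CompleteSpace E] {K : Set (E × ℝ)}
    (hK : Convex ℝ K) (hKc : IsClosed K) {ξ : E} {s t : ℝ} (hs : (ξ, s) ∉ K)
    (ht : (ξ, t) ∈ K) (hst : s < t) :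
    ∃ (x : E) (u : ℝ), (∀ p ∈ K, ⟪p.1, x⟫ - p.2 < u) ∧ u < ⟪ξ, x⟫ - s := by
  obtain ⟨φ, u, hK, hu⟩ := geometric_hahn_banach_closed_point hK hKc hs
  obtain ⟨y, a, hφ⟩ := φ.exists_eq_inner_sub_mul
  have ha : 0 < a := by
    have := hK _ ht
    rw [hφ] at this hu
    nlinarith
  have hscale : ∀ q : E × ℝ, ⟪q.1, a⁻¹ • y⟫ - q.2 = a⁻¹ * φ q := by
    rintro ⟨v, r⟩
    rw [hφ, real_inner_smul_right]
    field_simp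
  refine ⟨a⁻¹ • y, a⁻¹ * u, fun p hp => ?_, ?_⟩
  · rw [hscale]
    exact mul_lt_mul_of_pos_left (hK p hp) (inv_pos.2 ha)
  · rw [hscale (ξ, s)]
    exact mul_lt_mul_of_pos_left hu (inv_pos.2 ha)

theorem exists_prodMk_mem_convexHull_range {R F G ι : Type*}
    [Field R] [LinearOrder R] [IsStrictOrderedRing R]
    [AddCommGroup F] [Module R F] [AddCommGroup G] [Module R G]
    {P : ι → F} (g : ι → G) {ξ : F} (hξ : ξ ∈ convexHull R (range P)) :
    ∃ t, (ξ, t) ∈ convexHull R (range fun i => (P i, g i)) := by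
  have himg := (LinearMap.fst R F G).image_convexHull (range fun i => (P i, g i))
  rw [← range_comp] at himg
  obtain ⟨p, hp, rfl⟩ := himg ▸ hξ
  exact ⟨p.2, hp⟩

theorem inner_sub_le_of_mem_convexHull {ι : Type*} {P : ι → E} {c : ι → ℝ} {f : E → ℝ}
    (hf : ∀ x i, ⟪x, P i⟫ + c i ≤ f x) {p : E × ℝ}
    (hp : p ∈ convexHull ℝ (range fun i => (P i, -c i))) (x : E) :
    ⟪p.1, x⟫ - f x ≤ p.2 := by
  let L : E × ℝ →ₗ[ℝ] ℝ := (innerₛₗ ℝ x).comp (LinearMap.fst ℝ E ℝ) - LinearMap.snd ℝ E ℝ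
  obtain ⟨_, ⟨i, rfl⟩, hi⟩ :=
    (L.convexOn convex_univ).exists_ge_of_mem_convexHull (subset_univ _) hp
  simp only [L, LinearMap.sub_apply, LinearMap.comp_apply, innerₛₗ_apply_apply,
    LinearMap.fst_apply, LinearMap.snd_apply] at hi
  rw [real_inner_comm]
  linarith [hf x i]

theorem IsCompact.isCompact_fiber_prodMk {X : Type*} [TopologicalSpace X] [T2Space X]
    {K : Set (X × ℝ)} (hK : IsCompact K) (ξ : X) : IsCompact {t : ℝ | (ξ, t) ∈ K} :=
  (hK.image continuous_snd).of_isClosed_subset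
    (hK.isClosed.preimage (Continuous.prodMk_right ξ)) fun t ht => ⟨(ξ, t), ht, rfl⟩

theorem isLUB_inner_sub_sInf_convexHull [CompleteSpace E] {ι : Type*} [Finite ι]
    {P : ι → E} {c : ι → ℝ} {f : E → ℝ}
    (hf : ∀ x, IsGreatest (range fun i => ⟪x, P i⟫ + c i) (f x))
    {ξ : E} (hξ : ξ ∈ convexHull ℝ (range P)) :
    IsLUB (range fun x => ⟪ξ, x⟫ - f x)
      (sInf {t | (ξ, t) ∈ convexHull ℝ (range fun i => (P i, -c i))}) := by
  set K := convexHull ℝ (range fun i => (P i, -c i))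
  have hK : IsCompact K := (finite_range _).isCompact_convexHull ℝ
  have hfiber := hK.isCompact_fiber_prodMk ξ
  have hmin : sInf {t | (ξ, t) ∈ K} ∈ {t | (ξ, t) ∈ K} :=
    hfiber.sInf_mem (exists_prodMk_mem_convexHull_range _ hξ)
  refine ⟨?_, fun s hs => ?_⟩
  · rintro _ ⟨x, rfl⟩
    exact inner_sub_le_of_mem_convexHull (fun x i => (hf x).2 ⟨i, rfl⟩) hmin x
  · by_contra! hlt
    have hsK : (ξ, s) ∉ K := fun h => hlt.not_ge (csInf_le hfiber.bddBelow h)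
    obtain ⟨x, u, hKu, hu⟩ :=
      (convex_convexHull ℝ _).exists_inner_sub_lt_of_notMem hK.isClosed hsK hmin hlt
    obtain ⟨i, hi⟩ := (hf x).1
    have hPi := hKu _ (subset_convexHull ℝ _ ⟨i, rfl⟩)
    have hx := hs ⟨x, rfl⟩
    simp only at hi hPi hx
    rw [real_inner_comm] at hPi
    linarith

theorem legendre_transform_graph_is_lower_hull_general
    (n N : ℕ)
    (P : Fin N → EuclideanSpace ℝ (Fin n))
    (c : Fin N → ℝ)
    (fi : Fin N → EuclideanSpace ℝ (Fin n) → ℝ)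
    (hfi : ∀ i x, fi i x = ⟪x, P i⟫ + c i)
    (f : EuclideanSpace ℝ (Fin n) → ℝ)
    (hf : ∀ x, IsGreatest (Set.range fun i => fi i x) (f x))
    (ξ : EuclideanSpace ℝ (Fin n)) (hξ : ξ ∈ convexHull ℝ (Set.range P)) :
    (⨆ x, (⟪ξ, x⟫ - f x)) =
      sInf {t : ℝ | (ξ, t) ∈ convexHull ℝ (Set.range fun i => (P i, -c i))} := by
  simp_rw [hfi] at hf
  exact (isLUB_inner_sub_sInf_convexHull hf hξ).ciSup_eq

/-- over the convex hull of the `P_i`, the graph of the Legendre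
transform of `f` is the lower convex hull of the lifted points `(P_i, −c_i)`:
`f̂(ξ) = inf { t : (ξ,t) ∈ conv{(P_i, −c_i)} }`. -/
theorem legendre_transform_graph_is_lower_hull
    (n N : ℕ) (hN : 1 ≤ N)
    (P : Fin N → EuclideanSpace ℝ (Fin n)) (w : Fin N → ℝ)
    (c : Fin N → ℝ) (hc : ∀ i, c i = -((‖P i‖ ^ 2 - w i) / 2))
    (fi : Fin N → EuclideanSpace ℝ (Fin n) → ℝ)
    (hfi : ∀ i x, fi i x = ⟪x, P i⟫ + c i)
    (f : EuclideanSpace ℝ (Fin n) → ℝ)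
    (hf : ∀ x, IsGreatest (Set.range fun i => fi i x) (f x))
    (ξ : EuclideanSpace ℝ (Fin n)) (hξ : ξ ∈ convexHull ℝ (Set.range P)) :
    (⨆ x, (⟪ξ, x⟫ - f x)) =
      sInf {t : ℝ | (ξ, t) ∈ convexHull ℝ (Set.range fun i => (P i, -c i))} :=
  legendre_transform_graph_is_lower_hull_general n N P c fi hfi f hf ξ hξ
end

section
/- For every index j and every x ∈ ℝⁿ one has ⟨P_j, x⟩ − f(x) ≤ −c_j; moreover the power cell Pow(j) = {x ∈ ℝⁿ : f_i(x) ≤ f_j(x) for all i} is nonempty if and only if sup_{x ∈ ℝⁿ} (⟨P_j, x⟩ − f(x)) = −c_j, i.e. if and only if f̂(P_j) = −c_j. (This characterizes which cells of the power diagram disappear: they are the ones whose lifted point (P_j, −c_j) lies strictly inside the epigraph of the Legendre transform.) -/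
open scoped RealInnerProductSpace

open Filter Topology Bornology in
lemma feasible_of_approx {n : ℕ} {ι : Type*} (a : ι → EuclideanSpace ℝ (Fin n)) (b : ι → ℝ)
    (s : Finset ι)
    (h : ∀ ε : ℝ, 0 < ε → ∃ x : EuclideanSpace ℝ (Fin n), ∀ i ∈ s, b i - ε ≤ ⟪x, a i⟫) :
    ∃ x : EuclideanSpace ℝ (Fin n), ∀ i ∈ s, b i ≤ ⟪x, a i⟫ := by
  classical
  induction s using Finset.strongInduction with
  | _ s ih =>
  set C : ℕ → Set (EuclideanSpace ℝ (Fin n)) :=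
    fun k => {x | ∀ i ∈ s, b i - 1/(k+1) ≤ ⟪x, a i⟫} with hC
  have hCne : ∀ k, (C k).Nonempty := by
    intro k
    obtain ⟨z, hz⟩ := h (1/(k+1)) (by positivity)
    exact ⟨z, hz⟩
  have hCconv : ∀ k, Convex ℝ (C k) := by
    intro k x hx y hy α β hα hβ hαβ i hi
    have h1 : b i - 1/(k+1) ≤ ⟪x, a i⟫ := hx i hi
    have h2 : b i - 1/(k+1) ≤ ⟪y, a i⟫ := hy i hi
    have h3 : ⟪α • x + β • y, a i⟫ = α * ⟪x, a i⟫ + β * ⟪y, a i⟫ := by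
      rw [inner_add_left, real_inner_smul_left, real_inner_smul_left]
    show b i - 1/(k+1) ≤ ⟪α • x + β • y, a i⟫
    rw [h3]
    have e1 := mul_le_mul_of_nonneg_left h1 hα
    have e2 := mul_le_mul_of_nonneg_left h2 hβ
    have e3 : b i - 1/(k+1) = α*(b i - 1/(k+1)) + β*(b i - 1/(k+1)) := by
      linear_combination (-(b i - 1/((k:ℝ)+1))) * hαβ
    linarith
  have hCclosed : ∀ k, IsClosed (C k) := by
    intro k
    have : C k = ⋂ i ∈ s, {x : EuclideanSpace ℝ (Fin n) | b i - 1/(k+1) ≤ ⟪x, a i⟫} := by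
      ext x; simp [hC, Set.mem_iInter]
    rw [this]
    exact isClosed_biInter fun i _ =>
      isClosed_le continuous_const (continuous_id.inner continuous_const)
  have hproj : ∀ k, ∃ v ∈ C k, ∀ w ∈ C k, ‖v‖^2 ≤ ⟪v, w⟫ := by
    intro k
    obtain ⟨v, hv, hvmin⟩ := exists_norm_eq_iInf_of_complete_convex (hCne k)
      ((hCclosed k).isComplete) (hCconv k) 0
    refine ⟨v, hv, fun w hw => ?_⟩
    have h2 := (norm_eq_iInf_iff_real_inner_le_zero (hCconv k) hv).mp hvmin w hw
    have h3 : ⟪(0:EuclideanSpace ℝ (Fin n)) - v, w - v⟫ = -⟪v, w⟫ + ‖v‖^2 := by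
      rw [inner_sub_left, inner_sub_right, inner_sub_right, inner_zero_left,
        inner_zero_left, real_inner_self_eq_norm_sq]
      ring
    rw [h3] at h2
    linarith
  choose x hxC hxmin using hproj
  have hCmono : ∀ k l : ℕ, k ≤ l → C l ⊆ C k := by
    intro k l hkl z hz i hi
    have h1 : b i - 1/(l+1) ≤ ⟪z, a i⟫ := hz i hi
    have hcast : ((k:ℝ)+1) ≤ ((l:ℝ)+1) := by exact_mod_cast by omega
    have h2 : (1:ℝ)/(l+1) ≤ 1/(k+1) := one_div_le_one_div_of_le (by positivity) hcast
    show b i - 1/(k+1) ≤ ⟪z, a i⟫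
    linarith
  have hnmono : Monotone fun k => ‖x k‖ := by
    intro k l hkl
    simp only
    have hmem := hCmono k l hkl (hxC l)
    have h1 := hxmin k (x l) hmem
    have h2 : ⟪x k, x l⟫ ≤ ‖x k‖ * ‖x l‖ := real_inner_le_norm _ _
    rcases eq_or_lt_of_le (norm_nonneg (x k)) with h0 | h0
    · rw [← h0]; exact norm_nonneg _
    · nlinarith
  by_cases hbdd : ∃ R : ℝ, ∀ k, ‖x k‖ ≤ R
  · obtain ⟨R, hR⟩ := hbdd
    have hxball : ∀ k, x k ∈ Metric.closedBall (0:EuclideanSpace ℝ (Fin n)) R := by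
      intro k; simpa [Metric.mem_closedBall] using hR k
    obtain ⟨z, -, φ, hφ, hz⟩ := tendsto_subseq_of_bounded
      Metric.isBounded_closedBall hxball
    refine ⟨z, fun i hi => ?_⟩
    have htend : Tendsto (fun k => ⟪x (φ k), a i⟫) atTop (𝓝 ⟪z, a i⟫) :=
      ((continuous_id.inner continuous_const).tendsto z).comp hz
    have htend2 : Tendsto (fun k : ℕ => b i - 1/((φ k : ℝ)+1)) atTop (𝓝 (b i)) := by
      have h3 : Tendsto (fun k : ℕ => ((φ k : ℝ) + 1)) atTop atTop :=
        tendsto_atTop_add_const_right _ 1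
          (tendsto_natCast_atTop_atTop.comp hφ.tendsto_atTop)
      have h4 : Tendsto (fun k : ℕ => 1/((φ k : ℝ)+1)) atTop (𝓝 0) :=
        h3.inv_tendsto_atTop.congr (fun k => (one_div _).symm)
      simpa using tendsto_const_nhds.sub h4
    exact le_of_tendsto_of_tendsto' htend2 htend fun k => hxC (φ k) i hi
  · push_neg at hbdd
    have hnorm_top : Tendsto (fun k => ‖x k‖) atTop atTop := by
      apply tendsto_atTop_atTop_of_monotone' hnmono
      rintro ⟨R, hR⟩
      obtain ⟨k, hk⟩ := hbdd R
      exact absurd (hR (Set.mem_range_self k)) (not_le.mpr hk)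
    set u : ℕ → EuclideanSpace ℝ (Fin n) := fun k => ‖x k‖⁻¹ • x k with hu
    have huball : ∀ k, u k ∈ Metric.closedBall (0:EuclideanSpace ℝ (Fin n)) 1 := by
      intro k
      simp only [Metric.mem_closedBall, dist_zero_right, hu, norm_smul, norm_inv,
        norm_norm]
      rcases eq_or_lt_of_le (norm_nonneg (x k)) with h0 | h0
      · rw [← h0]; simp
      · rw [inv_mul_cancel₀ (ne_of_gt h0)]
    obtain ⟨v, -, φ, hφ, hv⟩ := tendsto_subseq_of_bounded
      Metric.isBounded_closedBall huball
    have hvnorm : ‖v‖ = 1 := by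
      have h1 : Tendsto (fun k => ‖u (φ k)‖) atTop (𝓝 ‖v‖) :=
        (continuous_norm.tendsto v).comp hv
      have h2 : ∀ᶠ k in atTop, ‖u (φ k)‖ = 1 := by
        filter_upwards [(hnorm_top.comp hφ.tendsto_atTop).eventually_ge_atTop 1] with k hk
        have hpos : (0:ℝ) < ‖x (φ k)‖ := lt_of_lt_of_le one_pos hk
        simp [hu, norm_smul, inv_mul_cancel₀ (ne_of_gt hpos)]
      exact tendsto_nhds_unique (h1.congr' h2) tendsto_const_nhds
    have hinv_tend : Tendsto (fun k => ‖x (φ k)‖⁻¹) atTop (𝓝 0) :=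
      (hnorm_top.comp hφ.tendsto_atTop).inv_tendsto_atTop
    have hva : ∀ i ∈ s, 0 ≤ ⟪v, a i⟫ := by
      intro i hi
      have htend : Tendsto (fun k => ⟪u (φ k), a i⟫) atTop (𝓝 ⟪v, a i⟫) :=
        ((continuous_id.inner continuous_const).tendsto v).comp hv
      have hlow : ∀ k, ‖x (φ k)‖⁻¹ * (b i - 1) ≤ ⟪u (φ k), a i⟫ := by
        intro k
        have heq : ⟪u (φ k), a i⟫ = ‖x (φ k)‖⁻¹ * ⟪x (φ k), a i⟫ := by
          rw [hu]; exact real_inner_smul_left _ _ _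
        rw [heq]
        apply mul_le_mul_of_nonneg_left _ (inv_nonneg.mpr (norm_nonneg _))
        have h5 : b i - 1/((φ k : ℝ)+1) ≤ ⟪x (φ k), a i⟫ := hxC (φ k) i hi
        have h6 : (1:ℝ)/((φ k : ℝ)+1) ≤ 1 := by
          rw [div_le_one (by positivity)]
          linarith [Nat.cast_nonneg (φ k) (α := ℝ)]
        linarith
      have htend2 : Tendsto (fun k => ‖x (φ k)‖⁻¹ * (b i - 1)) atTop (𝓝 0) := by
        simpa using hinv_tend.mul_const (b i - 1)
      exact le_of_tendsto_of_tendsto' htend2 htend hlow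
    by_cases hI : ∀ i ∈ s, ⟪v, a i⟫ ≤ 0
    · exfalso
      have hva0 : ∀ i ∈ s, ⟪v, a i⟫ = 0 := fun i hi => le_antisymm (hI i hi) (hva i hi)
      have hxv : ∀ k, ⟪x k, v⟫ = 0 := by
        intro k
        have hmem : x k - ⟪x k, v⟫ • v ∈ C k := by
          intro i hi
          have heq : ⟪x k - ⟪x k, v⟫ • v, a i⟫ = ⟪x k, a i⟫ := by
            rw [inner_sub_left, real_inner_smul_left, hva0 i hi]; ring
          show b i - 1/(k+1) ≤ ⟪x k - ⟪x k, v⟫ • v, a i⟫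
          rw [heq]; exact hxC k i hi
        have h1 := hxmin k _ hmem
        rw [inner_sub_right, real_inner_smul_right, real_inner_self_eq_norm_sq] at h1
        have h2 : ⟪x k, v⟫ * ⟪x k, v⟫ ≤ 0 := by linarith
        exact mul_self_eq_zero.mp (le_antisymm h2 (mul_self_nonneg _))
      have htend : Tendsto (fun k => ⟪u (φ k), v⟫) atTop (𝓝 ⟪v, v⟫) :=
        ((continuous_id.inner continuous_const).tendsto v).comp hv
      have hzero : ∀ k, ⟪u (φ k), v⟫ = 0 := by
        intro k
        rw [hu]
        show ⟪‖x (φ k)‖⁻¹ • x (φ k), v⟫ = 0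
        rw [real_inner_smul_left, hxv, mul_zero]
      have hvv : ⟪v, v⟫ = 0 :=
        tendsto_nhds_unique ((tendsto_congr hzero).mp htend) tendsto_const_nhds
      rw [real_inner_self_eq_norm_sq, hvnorm] at hvv
      norm_num at hvv
    · push_neg at hI
      obtain ⟨i₀, hi₀s, hi₀⟩ := hI
      set s' : Finset ι := s.filter (fun i => ⟪v, a i⟫ ≤ 0) with hs'
      have hss' : s' ⊂ s := by
        refine ⟨Finset.filter_subset _ _, fun hsub => ?_⟩
        have hmem := hsub hi₀s
        rw [hs', Finset.mem_filter] at hmem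
        linarith [hmem.2]
      have happrox' : ∀ ε : ℝ, 0 < ε →
          ∃ x : EuclideanSpace ℝ (Fin n), ∀ i ∈ s', b i - ε ≤ ⟪x, a i⟫ := by
        intro ε hε
        obtain ⟨z, hz⟩ := h ε hε
        exact ⟨z, fun i hi => hz i (Finset.mem_filter.mp hi).1⟩
      obtain ⟨y, hy⟩ := ih s' hss' happrox'
      set g : ι → ℝ := fun i => (b i - ⟪y, a i⟫) / ⟪v, a i⟫ with hg
      set T : ℝ := max (s.sup' ⟨i₀, hi₀s⟩ g) 0 with hT
      have hT0 : 0 ≤ T := le_max_right _ _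
      refine ⟨y + T • v, fun i hi => ?_⟩
      have hinner : ⟪y + T • v, a i⟫ = ⟪y, a i⟫ + T * ⟪v, a i⟫ := by
        rw [inner_add_left, real_inner_smul_left]
      rw [hinner]
      by_cases hpos : 0 < ⟪v, a i⟫
      · have hgle : g i ≤ T := le_trans (Finset.le_sup' g hi) (le_max_left _ _)
        have hdiv : (b i - ⟪y, a i⟫) / ⟪v, a i⟫ ≤ T := hgle
        rw [div_le_iff₀ hpos] at hdiv
        linarith
      · have hi' : i ∈ s' := Finset.mem_filter.mpr ⟨hi, not_lt.mp hpos⟩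
        have h1 := hy i hi'
        nlinarith [hva i hi]

/-- `⟨P_j,x⟩ − f(x) ≤ −c_j` for all `x`, and the power cell of `j`
is nonempty iff `f̂(P_j) = sup_x (⟨P_j,x⟩ − f(x)) = −c_j`. -/
theorem power_cell_nonempty_iff_legendre
    (n N : ℕ) (hN : 1 ≤ N)
    (P : Fin N → EuclideanSpace ℝ (Fin n)) (w : Fin N → ℝ)
    (c : Fin N → ℝ) (hc : ∀ i, c i = -((‖P i‖ ^ 2 - w i) / 2))
    (fi : Fin N → EuclideanSpace ℝ (Fin n) → ℝ)
    (hfi : ∀ i x, fi i x = ⟪x, P i⟫ + c i)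
    (f : EuclideanSpace ℝ (Fin n) → ℝ)
    (hf : ∀ x, IsGreatest (Set.range fun i => fi i x) (f x))
    (Pow : Fin N → Set (EuclideanSpace ℝ (Fin n)))
    (hPow : ∀ j, Pow j = {x | ∀ i, fi i x ≤ fi j x})
    (j : Fin N) :
    (∀ x, ⟪P j, x⟫ - f x ≤ -c j) ∧
      ((Pow j).Nonempty ↔ (⨆ x, (⟪P j, x⟫ - f x)) = -c j) := by
  have hub : ∀ x, ⟪P j, x⟫ - f x ≤ -c j := by
    intro x
    have h1 : fi j x ≤ f x := (hf x).2 (Set.mem_range_self j)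
    rw [hfi j x] at h1
    rw [real_inner_comm]
    linarith
  have hbdd : BddAbove (Set.range fun x => ⟪P j, x⟫ - f x) := by
    refine ⟨-c j, ?_⟩
    rintro r ⟨x, rfl⟩
    exact hub x
  refine ⟨hub, ?_, ?_⟩
  · rintro ⟨x, hx⟩
    rw [hPow j] at hx
    -- on the cell, f x = fi j x
    obtain ⟨i₀, hi₀⟩ := (hf x).1
    have hfx : f x = fi j x := le_antisymm (hi₀ ▸ hx i₀) ((hf x).2 (Set.mem_range_self j))
    have hval : ⟪P j, x⟫ - f x = -c j := by
      rw [hfx, hfi j x, real_inner_comm]; ring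
    refine le_antisymm (ciSup_le hub) ?_
    calc -c j = ⟪P j, x⟫ - f x := hval.symm
    _ ≤ ⨆ x, (⟪P j, x⟫ - f x) := le_ciSup hbdd x
  · intro hsup
    have happrox : ∀ ε : ℝ, 0 < ε → ∃ x : EuclideanSpace ℝ (Fin n),
        ∀ i ∈ (Finset.univ : Finset (Fin N)),
          (fun i => c i - c j) i - ε ≤ ⟪x, (fun i => P j - P i) i⟫ := by
      intro ε hε
      have hlt : -c j - ε < ⨆ x, (⟪P j, x⟫ - f x) := by rw [hsup]; linarith
      obtain ⟨x, hx⟩ := exists_lt_of_lt_ciSup hlt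
      refine ⟨x, fun i _ => ?_⟩
      have h1 : fi i x ≤ f x := (hf x).2 (Set.mem_range_self i)
      rw [hfi i x] at h1
      have h2 : ⟪x, P j - P i⟫ = ⟪P j, x⟫ - ⟪x, P i⟫ := by
        rw [inner_sub_right, real_inner_comm]
      simp only at h2 ⊢
      rw [h2]
      linarith
    obtain ⟨x, hx⟩ := feasible_of_approx (fun i => P j - P i) (fun i => c i - c j)
      Finset.univ happrox
    refine ⟨x, ?_⟩
    rw [hPow j]
    intro i
    have h1 := hx i (Finset.mem_univ i)
    rw [inner_sub_right] at h1
    rw [hfi i x, hfi j x]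
    linarith
end

section
/- If the point P_j lies outside the convex hull of the remaining points {P_i : i ≠ j}, then the power cell of P_j is nonempty: there exists x ∈ ℝⁿ such that f_i(x) ≤ f_j(x) for all i. (This holds for every choice of weights w_1,…,w_N.) -/
/-!
Separate `P j` strictly from the convex hull of the other points by a vector `v`, so that
`⟪v, P i⟫ - ⟪v, P j⟫ > 0` for every `i ≠ j`. Moving far enough in the direction `-v`, the
affine function `f j` decreases more slowly than every other `f i`, and finitely many gaps
`c i - c j` are eventually absorbed.
-/

open scoped RealInnerProductSpace
open Filter

theorem exists_forall_le_mul_of_pos {ι : Type*} [Finite ι] (a δ : ι → ℝ) (hδ : ∀ i, 0 < δ i) :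
    ∃ t : ℝ, ∀ i, a i ≤ t * δ i :=
  (eventually_all.2 fun i =>
    (tendsto_id.atTop_mul_const (hδ i)).eventually_ge_atTop (a i)).exists

section InnerProductSpace

variable {E : Type*} [NormedAddCommGroup E] [InnerProductSpace ℝ E] [CompleteSpace E]

theorem exists_inner_lt_inner_of_notMem {t : Set E} (ht : Convex ℝ t) (ht' : IsClosed t)
    {p : E} (hp : p ∉ t) : ∃ v : E, ∀ q ∈ t, ⟪v, p⟫ < ⟪v, q⟫ := by
  obtain ⟨g, u, hgp, hgt⟩ := geometric_hahn_banach_point_closed ht ht' hp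
  refine ⟨(InnerProductSpace.toDual ℝ E).symm g, fun q hq => ?_⟩
  simp only [InnerProductSpace.toDual_symm_apply]
  exact hgp.trans (hgt q hq)

theorem exists_forall_inner_add_le_of_notMem_convexHull {ι : Type*} [Finite ι]
    (P : ι → E) (c : ι → ℝ) (j : ι) (hj : P j ∉ convexHull ℝ (P '' {i | i ≠ j})) :
    ∃ x : E, ∀ i, ⟪x, P i⟫ + c i ≤ ⟪x, P j⟫ + c j := by
  have hclosed : IsClosed (convexHull ℝ (P '' {i | i ≠ j})) :=
    ((Set.toFinite _).image P).isClosed_convexHull (𝕜 := ℝ)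
  obtain ⟨v, hv⟩ := exists_inner_lt_inner_of_notMem (convex_convexHull ℝ _) hclosed hj
  have hgap : ∀ i : {i // i ≠ j}, 0 < ⟪v, P i⟫ - ⟪v, P j⟫ := fun i =>
    sub_pos.2 <| hv _ <| subset_convexHull ℝ _ ⟨i, i.2, rfl⟩
  obtain ⟨t, ht⟩ := exists_forall_le_mul_of_pos (fun i : {i // i ≠ j} => c i - c j) _ hgap
  refine ⟨(-t) • v, fun i => ?_⟩
  rcases eq_or_ne i j with rfl | hij
  · rfl
  · have hti := ht ⟨i, hij⟩
    simp only [real_inner_smul_left] at hti ⊢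
    linarith

end InnerProductSpace

theorem power_cell_nonempty_of_not_mem_convexHull_general
    (n N : ℕ)
    (P : Fin N → EuclideanSpace ℝ (Fin n))
    (c : Fin N → ℝ)
    (f : Fin N → EuclideanSpace ℝ (Fin n) → ℝ)
    (hf : ∀ i x, f i x = ⟪x, P i⟫ + c i)
    (j : Fin N)
    (hj : P j ∉ convexHull ℝ {p | ∃ i, i ≠ j ∧ P i = p}) :
    ∃ x : EuclideanSpace ℝ (Fin n), ∀ i, f i x ≤ f j x := by
  obtain ⟨x, hx⟩ := exists_forall_inner_add_le_of_notMem_convexHull P c j hj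
  exact ⟨x, fun i => by simpa only [hf] using hx i⟩

/-- if `P_j` lies outside the convex hull of the other points, then
the power cell of `P_j` is nonempty, whatever the weights. -/
theorem power_cell_nonempty_of_not_mem_convexHull
    (n N : ℕ) (hN : 1 ≤ N)
    (P : Fin N → EuclideanSpace ℝ (Fin n)) (w : Fin N → ℝ)
    (c : Fin N → ℝ) (hc : ∀ i, c i = -((‖P i‖ ^ 2 - w i) / 2))
    (f : Fin N → EuclideanSpace ℝ (Fin n) → ℝ)
    (hf : ∀ i x, f i x = ⟪x, P i⟫ + c i)
    (j : Fin N)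
    (hj : P j ∉ convexHull ℝ {p | ∃ i, i ≠ j ∧ P i = p}) :
    ∃ x : EuclideanSpace ℝ (Fin n), ∀ i, f i x ≤ f j x :=
  power_cell_nonempty_of_not_mem_convexHull_general n N P c f hf j hj
end

section
/- Let α ⊆ {1,…,N} be a nonempty set of indices and suppose c ∈ ℝⁿ is a point with g_i(c) = m for all i ∈ α (c lies on the separator of α, and m is the common value). Then for every x in the convex hull of {P_i : i ∈ α} one has min_{i∈α} g_i(x) ≤ m − ½‖x − c‖². In particular, if α is an active cell (so that c = c(α) lies in the relative interior of conv{P_i : i∈α} and g(c) = m), the function min_{i∈α} g_i attains its strict maximum over conv{P_i : i∈α} at c, which yields the critical point of min_i g_i of index dim α associated to the active cell α. -/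
open scoped RealInnerProductSpace

/-- if `c` lies on the separator of `α` with common value
`m = g_i(c)` for `i ∈ α`, then on the convex hull of `{P_i : i ∈ α}` one has
`min_{i∈α} g_i(x) ≤ m − ½‖x − c‖²`; in particular for an active cell the
function `min_{i∈α} g_i` attains its strict maximum over the hull at `c`. -/
theorem separator_strict_max_on_hull
    (n N : ℕ) (hN : 1 ≤ N)
    (P : Fin N → EuclideanSpace ℝ (Fin n)) (w : Fin N → ℝ)
    (g : Fin N → EuclideanSpace ℝ (Fin n) → ℝ)
    (hg : ∀ i x, g i x = ‖x - P i‖ ^ 2 / 2 - w i / 2)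
    (α : Finset (Fin N)) (hα : α.Nonempty)
    (c : EuclideanSpace ℝ (Fin n)) (m : ℝ)
    (hc : ∀ i ∈ α, g i c = m)
    (x : EuclideanSpace ℝ (Fin n))
    (hx : x ∈ convexHull ℝ (P '' α)) :
    α.inf' hα (fun i => g i x) ≤ m - ‖x - c‖ ^ 2 / 2 := by
  set v := x - c with hv
  set M := α.sup' hα (fun i => ⟪v, P i⟫) with hM
  have hlin : IsLinearMap ℝ (fun y : EuclideanSpace ℝ (Fin n) => ⟪v, y⟫) :=
    ⟨fun a b => inner_add_right v a b, fun r a => real_inner_smul_right v a r⟩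
  have hsub : convexHull ℝ (P '' α) ⊆ {y | ⟪v, y⟫ ≤ M} := by
    apply convexHull_min
    · rintro y ⟨i, hi, rfl⟩
      exact Finset.le_sup' (fun i => ⟪v, P i⟫) (by simpa using hi)
    · exact convex_halfSpace_le hlin M
  have hxM : ⟪v, x⟫ ≤ M := hsub hx
  obtain ⟨i, hi, hieq⟩ := Finset.exists_mem_eq_sup' hα (fun i => ⟪v, P i⟫)
  have hkey : ⟪v, x⟫ ≤ ⟪v, P i⟫ := by rw [← hieq]; exact hxM
  have h1 : ‖x - P i‖ ^ 2 = ‖v‖ ^ 2 + 2 * ⟪v, c - P i⟫ + ‖c - P i‖ ^ 2 := by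
    have : x - P i = v + (c - P i) := by rw [hv]; abel
    rw [this, norm_add_sq_real]
  have h2 : ⟪v, c - P i⟫ = ⟪v, c⟫ - ⟪v, P i⟫ := inner_sub_right v c (P i)
  have h3 : ⟪v, x⟫ = ‖v‖ ^ 2 + ⟪v, c⟫ := by
    have : x = v + c := by rw [hv]; abel
    rw [this, inner_add_right, real_inner_self_eq_norm_sq]
  have hgi : g i x ≤ m - ‖x - c‖ ^ 2 / 2 := by
    rw [hg, ← hc i hi, hg, ← hv]
    nlinarith [h1, h2, h3, hkey]
  exact le_trans (Finset.inf'_le _ hi) hgi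
end

section
/- Let β ⊆ {1,…,N} be a nonempty set of indices and let c ∈ ℝⁿ satisfy g_i(c) = g_j(c) for all i, j ∈ β (c lies on the separator of β). Let y be the point of the convex hull K = conv{P_i : i ∈ β} closest to c (i.e. y ∈ K and ‖c − y‖ ≤ ‖c − q‖ for all q ∈ K). Then for every i ∈ β with ⟨c − y, P_i − y⟩ = 0 and every j ∈ β one has g_j(y) ≤ g_i(y). (This is the key inequality showing that the closest point of conv(β) to c(β) is c(α) for a face α of β that is not active for the 'Up'-reason.) -/
open scoped RealInnerProductSpace

/-- let `c` lie on the separator of `β` and let `y` be the point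
of `K = conv{P_i : i ∈ β}` closest to `c`. Then for every `i ∈ β` with
`⟨c − y, P_i − y⟩ = 0` and every `j ∈ β`, one has `g_j(y) ≤ g_i(y)`. -/
theorem closest_point_not_up_active
    (n N : ℕ) (hN : 1 ≤ N)
    (P : Fin N → EuclideanSpace ℝ (Fin n)) (w : Fin N → ℝ)
    (g : Fin N → EuclideanSpace ℝ (Fin n) → ℝ)
    (hg : ∀ i x, g i x = ‖x - P i‖ ^ 2 / 2 - w i / 2)
    (β : Finset (Fin N)) (hβ : β.Nonempty)
    (c : EuclideanSpace ℝ (Fin n))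
    (hc : ∀ i ∈ β, ∀ j ∈ β, g i c = g j c)
    (y : EuclideanSpace ℝ (Fin n))
    (hyK : y ∈ convexHull ℝ (P '' β))
    (hy : ∀ q ∈ convexHull ℝ (P '' β), ‖c - y‖ ≤ ‖c - q‖)
    (i : Fin N) (hi : i ∈ β) (hiy : ⟪c - y, P i - y⟫ = 0)
    (j : Fin N) (hj : j ∈ β) :
    g j y ≤ g i y := by
  set K : Set (EuclideanSpace ℝ (Fin n)) := convexHull ℝ (P '' β) with hK
  have hconv : Convex ℝ K := convex_convexHull ℝ _
  have heq : ‖c - y‖ = ⨅ q : K, ‖c - q‖ := by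
    haveI : Nonempty K := ⟨⟨y, hyK⟩⟩
    refine le_antisymm (le_ciInf fun q => hy q q.2) ?_
    exact ciInf_le ⟨0, fun _ ⟨q, hq⟩ => hq ▸ norm_nonneg _⟩ (⟨y, hyK⟩ : K)
  have hproj : ∀ q ∈ K, ⟪c - y, q - y⟫ ≤ 0 :=
    (norm_eq_iInf_iff_real_inner_le_zero hconv hyK).mp heq
  have hPjK : P j ∈ K := subset_convexHull ℝ _ ⟨j, hj, rfl⟩
  have hji : ⟪c - y, P j - y⟫ ≤ 0 := hproj _ hPjK
  -- key inner product inequality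
  have e1 : ‖y - P i‖ ^ 2 = ‖y - c‖ ^ 2 + 2 * ⟪y - c, c - P i⟫ + ‖c - P i‖ ^ 2 := by
    rw [show y - P i = (y - c) + (c - P i) by abel]
    exact norm_add_sq_real _ _
  have e2 : ‖y - P j‖ ^ 2 = ‖y - c‖ ^ 2 + 2 * ⟪y - c, c - P j⟫ + ‖c - P j‖ ^ 2 := by
    rw [show y - P j = (y - c) + (c - P j) by abel]
    exact norm_add_sq_real _ _
  have e3 : ⟪y - c, c - P i⟫ - ⟪y - c, c - P j⟫
      = ⟪c - y, P i - y⟫ - ⟪c - y, P j - y⟫ := by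
    rw [show c - P i = (c - y) - (P i - y) by abel,
      show c - P j = (c - y) - (P j - y) by abel,
      show y - c = -(c - y) by abel,
      inner_neg_left, inner_neg_left]
    simp [inner_sub_right]
  have hcij : ‖c - P i‖ ^ 2 - w i = ‖c - P j‖ ^ 2 - w j := by
    have := hc i hi j hj
    rw [hg, hg] at this
    linarith
  rw [hg, hg]
  linarith [e1, e2, e3, hji, hiy, hcij]
end

section
/- Let M be a nonempty compact topological space equipped with a finite Borel measure μ such that μ(U) > 0 for every nonempty open set U ⊆ M, and let F : M → ℝ be continuous. Then lim_{h→∞} log(∫_M h^{F(s)} dμ(s)) / log(h) = sup_{s∈M} F(s). (Applied to F(s) = f_s(x) this gives the integral formula sup_{s∈M} f_s(x) = lim_{h→∞} log_h ∫_M h^{f_s(x)} ds used to compute the medial axis by Maslov dequantization.) -/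
open scoped Topology
open MeasureTheory Filter Set Real

/-!
The integral is at most `μ(M) h^(sup F)`, and for every `a < sup F` it is at least
`μ{F > a} h^a`, where `μ{F > a} > 0` because `{F > a}` is a nonempty open set.
After taking `log_h`, the constant factors contribute `log c / log h → 0`, so the
limit is squeezed between every `a < sup F` and `sup F`.
-/

lemma tendsto_log_mul_rpow_div_log {c : ℝ} (hc : 0 < c) (a : ℝ) :
    Tendsto (fun h : ℝ => log (c * h ^ a) / log h) atTop (𝓝 a) := by
  have hlim : Tendsto (fun h : ℝ => log c / log h + a) atTop (𝓝 (0 + a)) :=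
    (tendsto_const_nhds.div_atTop tendsto_log_atTop).add_const a
  rw [zero_add] at hlim
  refine hlim.congr' ?_
  filter_upwards [eventually_gt_atTop 1] with h hh
  rw [log_mul hc.ne' (rpow_pos_of_pos (by linarith) a).ne', log_rpow (by linarith), add_div,
    mul_div_cancel_right₀ _ (log_pos hh).ne']

theorem tendsto_log_div_log_of_rpow_bounds {g : ℝ → ℝ} {T : ℝ}
    (lower : ∀ a < T, ∃ c > 0, ∀ᶠ h in atTop, c * h ^ a ≤ g h)
    (upper : ∃ C > 0, ∀ᶠ h in atTop, g h ≤ C * h ^ T) :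
    Tendsto (fun h => log (g h) / log h) atTop (𝓝 T) := by
  have log_div_mono : ∀ᶠ h : ℝ in atTop, ∀ x y, 0 < x → x ≤ y → log x / log h ≤ log y / log h := by
    filter_upwards [eventually_gt_atTop 1] with h hh x y hx hxy
    exact div_le_div_of_nonneg_right (log_le_log hx hxy) (log_pos hh).le
  have g_pos : ∀ᶠ h in atTop, 0 < g h := by
    obtain ⟨c, hc, hcg⟩ := lower (T - 1) (by linarith)
    filter_upwards [hcg, eventually_gt_atTop 0] with h hg hh
    exact (mul_pos hc (rpow_pos_of_pos hh _)).trans_le hg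
  refine tendsto_order.2 ⟨fun b hb => ?_, fun b hb => ?_⟩
  · obtain ⟨a, hba, haT⟩ := exists_between hb
    obtain ⟨c, hc, hcg⟩ := lower a haT
    filter_upwards [(tendsto_log_mul_rpow_div_log hc a).eventually_const_lt hba, hcg,
      log_div_mono, eventually_gt_atTop 0] with h hlt hle hmono hh
    exact hlt.trans_le (hmono _ _ (mul_pos hc (rpow_pos_of_pos hh a)) hle)
  · obtain ⟨C, hC, hCg⟩ := upper
    filter_upwards [(tendsto_log_mul_rpow_div_log hC T).eventually_lt_const hb, hCg,
      log_div_mono, g_pos] with h hlt hle hmono hg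
    exact (hmono _ _ hg hle).trans_lt hlt

section

variable {M : Type*} [TopologicalSpace M] [MeasurableSpace M] {μ : Measure M} [IsFiniteMeasure μ]
  {F : M → ℝ}

lemma measureReal_setOf_lt_pos [Nonempty M] [μ.IsOpenPosMeasure] (hF : Continuous F) {a : ℝ}
    (ha : a < ⨆ s, F s) : 0 < μ.real {s | a < F s} := by
  obtain ⟨s, hs⟩ := exists_lt_of_lt_ciSup ha
  exact ENNReal.toReal_pos ((isOpen_lt continuous_const hF).measure_pos μ ⟨s, hs⟩).ne'
    (measure_ne_top _ _)

variable [OpensMeasurableSpace M] [CompactSpace M]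

lemma integrable_rpow_of_continuous (hF : Continuous F) {h : ℝ} (hh : 0 < h) :
    Integrable (fun s => h ^ F s) μ :=
  (continuous_const.rpow hF fun _ => Or.inl hh.ne').integrable_of_hasCompactSupport
    (HasCompactSupport.of_compactSpace _)

lemma integral_rpow_le_measureReal_mul_rpow_iSup (hF : Continuous F) {h : ℝ} (hh : 1 ≤ h) :
    ∫ s, h ^ F s ∂μ ≤ μ.real univ * h ^ (⨆ s, F s) := by
  have hbdd := (isCompact_range hF).bddAbove
  calc ∫ s, h ^ F s ∂μ ≤ ∫ _, h ^ (⨆ s, F s) ∂μ :=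
        integral_mono (integrable_rpow_of_continuous hF (by linarith)) (integrable_const _)
          fun s => rpow_le_rpow_of_exponent_le hh (le_ciSup hbdd s)
    _ = μ.real univ * h ^ (⨆ s, F s) := by rw [integral_const, smul_eq_mul]

lemma measureReal_mul_rpow_le_integral_rpow (hF : Continuous F) (a : ℝ) {h : ℝ} (hh : 1 ≤ h) :
    μ.real {s | a < F s} * h ^ a ≤ ∫ s, h ^ F s ∂μ := by
  have h_pos : 0 < h := by linarith
  have hint := integrable_rpow_of_continuous (μ := μ) hF h_pos
  calc μ.real {s | a < F s} * h ^ a = h ^ a * μ.real {s | a < F s} := mul_comm _ _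
    _ ≤ ∫ s in {s | a < F s}, h ^ F s ∂μ :=
        setIntegral_ge_of_const_le_real (measurableSet_lt measurable_const hF.measurable)
          (measure_ne_top _ _) (fun _ hs => rpow_le_rpow_of_exponent_le hh (le_of_lt hs))
          hint.integrableOn
    _ ≤ ∫ s, h ^ F s ∂μ :=
        setIntegral_le_integral hint (Eventually.of_forall fun _ => (rpow_pos_of_pos h_pos _).le)

end

/-- Maslov dequantization of a continuous function on a compact
space: `lim_{h→∞} log(∫ h^{F(s)} dμ)/log h = sup F`, for a finite Borel measure
positive on nonempty open sets. -/
theorem maslov_dequantization_integral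
    (M : Type*) [TopologicalSpace M] [CompactSpace M] [Nonempty M]
    [MeasurableSpace M] [BorelSpace M]
    (μ : MeasureTheory.Measure M) [MeasureTheory.IsFiniteMeasure μ]
    [μ.IsOpenPosMeasure]
    (F : M → ℝ) (hF : Continuous F) :
    Filter.Tendsto
      (fun h : ℝ => Real.log (∫ s, h ^ (F s) ∂μ) / Real.log h)
      Filter.atTop (𝓝 (⨆ s, F s)) := by
  refine tendsto_log_div_log_of_rpow_bounds (fun a ha => ?_) ?_
  · exact ⟨_, measureReal_setOf_lt_pos hF ha,
      (eventually_ge_atTop 1).mono fun _ hh => measureReal_mul_rpow_le_integral_rpow hF a hh⟩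
  · exact ⟨_, measureReal_univ_pos,
      (eventually_ge_atTop 1).mono fun _ hh => integral_rpow_le_measureReal_mul_rpow_iSup hF hh⟩
end
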